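/- The ordinary generating function Q_2(z) = Σ_{n≥0} Q_2(n) z^n of modular noncrossing diagrams (the case k = 2) satisfies, as an identity of formal power series, Q_2(z) = (1 − z² + z⁴) · p(z)^{−1} · F_2(ϑ_2(z)), where p(z) = 1 − z − z² + z³ + 2z⁴ + z⁶ (invertible since p(0) = 1), ϑ_2(z) = (z⁴ − z⁶ + z⁸) · p(z)^{−2} is a formal power series with zero constant term, and F_2(z) = Σ_{n≥0} C_n z^n is the generating function of the Catalan numbers C_n (equivalently, of 2-noncrossing perfect matchings). -/

import Mathlib

open scoped Classical

noncomputable section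

/-- A diagram on `n` vertices: a set of arcs `(i,j)` with `1 ≤ i < j ≤ n`
in which each vertex belongs to at most one arc. -/
structure Diagram (n : ℕ) where
  arcs : Finset (ℕ × ℕ)
  valid : ∀ a ∈ arcs, 1 ≤ a.1 ∧ a.1 < a.2 ∧ a.2 ≤ n
  disj : ∀ a ∈ arcs, ∀ b ∈ arcs, a ≠ b →
    a.1 ≠ b.1 ∧ a.1 ≠ b.2 ∧ a.2 ≠ b.1 ∧ a.2 ≠ b.2

namespace Diagram

variable {n : ℕ}

/-- `D` contains a `k`-crossing: arcs `(i₁,j₁),…,(i_k,j_k)` with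
`i₁ < i₂ < ⋯ < i_k < j₁ < j₂ < ⋯ < j_k`. -/
def HasCrossing (D : Diagram n) (k : ℕ) : Prop :=
  ∃ a : Fin k → ℕ × ℕ, (∀ t, a t ∈ D.arcs) ∧
    (∀ s t : Fin k, s < t → (a s).1 < (a t).1) ∧
    (∀ s t : Fin k, s < t → (a s).2 < (a t).2) ∧
    (∀ s t : Fin k, (a s).1 < (a t).2)

/-- `D` is `k`-noncrossing: it has no `k`-crossing. -/
def Noncrossing (k : ℕ) (D : Diagram n) : Prop := ¬ D.HasCrossing k

/-- `D` is a perfect matching: it has no isolated vertices. -/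
def Perfect (D : Diagram n) : Prop :=
  ∀ v : ℕ, 1 ≤ v → v ≤ n → ∃ a ∈ D.arcs, v = a.1 ∨ v = a.2

/-- `(i,j),(i+1,j-1),…,(i+σ-1,j-σ+1)` is a (maximal) stack of size `σ` in `D`. -/
def IsStack (D : Diagram n) (i j σ : ℕ) : Prop :=
  0 < σ ∧ (∀ t < σ, (i + t, j - t) ∈ D.arcs) ∧
    (i - 1, j + 1) ∉ D.arcs ∧ (i + σ, j - σ) ∉ D.arcs

/-- Every stack of `D` has size at least `τ`. -/
def MinStack (τ : ℕ) (D : Diagram n) : Prop :=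
  ∀ i j σ : ℕ, D.IsStack i j σ → τ ≤ σ

/-- Every arc of `D` has length at least `lam`. -/
def MinArcLength (lam : ℕ) (D : Diagram n) : Prop :=
  ∀ a ∈ D.arcs, lam ≤ a.2 - a.1

/-- A modular `k`-noncrossing diagram: `k`-noncrossing, every stack has size at least 2,
and every arc has length at least 4. -/
def Modular (k : ℕ) (D : Diagram n) : Prop :=
  D.Noncrossing k ∧ MinStack 2 D ∧ MinArcLength 4 D

/-- Two arcs cross (i.e. form a 2-crossing). -/
def Crosses (a b : ℕ × ℕ) : Prop :=
  (a.1 < b.1 ∧ b.1 < a.2 ∧ a.2 < b.2) ∨ (b.1 < a.1 ∧ a.1 < b.2 ∧ b.2 < a.2)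

/-- The number of 1-arcs (arcs of length 1) of `D`. -/
def oneArcs (D : Diagram n) : ℕ :=
  (D.arcs.filter fun a => a.2 = a.1 + 1).card

/-- The number of pairs of mutually crossing 2-arcs of `D` (`C₂`-elements). -/
def twoArcCrossPairs (D : Diagram n) : ℕ :=
  ((D.arcs ×ˢ D.arcs).filter fun p =>
    p.1.2 = p.1.1 + 2 ∧ p.2.2 = p.2.1 + 2 ∧ p.1.1 < p.2.1 ∧ Crosses p.1 p.2).card

/-- The number of `C₃`-elements of `D`: pairs `(α,β)` where `α` is the unique 2-arc
crossing `β` and `β` has length at least 3. -/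
def c3count (D : Diagram n) : ℕ :=
  (D.arcs.filter fun b => 3 ≤ b.2 - b.1 ∧
    ∃! a : ℕ × ℕ, a ∈ D.arcs ∧ a.2 = a.1 + 2 ∧ Crosses a b).card

/-- The number of `C₄`-elements of `D`: triples `(α₁,β,α₂)` where `α₁ ≠ α₂` are
2-arcs crossing `β`. -/
def c4count (D : Diagram n) : ℕ :=
  (D.arcs.filter fun b => ∃ a₁ ∈ D.arcs, ∃ a₂ ∈ D.arcs, a₁ ≠ a₂ ∧
    a₁.2 = a₁.1 + 2 ∧ a₂.2 = a₂.1 + 2 ∧ Crosses a₁ b ∧ Crosses a₂ b).card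

/-- A `V_k`-shape: a `k`-noncrossing perfect matching all of whose stacks have
size exactly 1. -/
def IsShape (k : ℕ) (D : Diagram n) : Prop :=
  D.Noncrossing k ∧ D.Perfect ∧ ∀ i j σ : ℕ, D.IsStack i j σ → σ = 1

/-- The dependency graph of `D`: one vertex per arc, two vertices adjacent iff the
corresponding arcs cross. -/
def depGraph (D : Diagram n) : SimpleGraph {a : ℕ × ℕ // a ∈ D.arcs} :=
  SimpleGraph.fromRel fun a b => Crosses a.1 b.1

/-- A skeleton diagram: every arc crosses some other arc and the dependency
graph is connected. -/
def IsSkeleton (D : Diagram n) : Prop :=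
  (∀ a ∈ D.arcs, ∃ b ∈ D.arcs, Crosses a b) ∧ D.depGraph.Connected

/-- `D` is irreducible: no vertex `ℓ` splits the arc set into two nonempty parts
`{(i,j) : j < ℓ}` and `{(i,j) : i ≥ ℓ}` covering all arcs. -/
def Irreducible (D : Diagram n) : Prop :=
  ¬ ∃ ℓ : ℕ, (∃ a ∈ D.arcs, a.2 < ℓ) ∧ (∃ a ∈ D.arcs, ℓ ≤ a.1) ∧
      ∀ a ∈ D.arcs, a.2 < ℓ ∨ ℓ ≤ a.1

/-- A canonical 3-noncrossing skeleton diagram: a 3-noncrossing skeleton diagram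
in which every stack has size at least 3 and every arc has length at least 4. -/
def CanonicalSkeleton (D : Diagram n) : Prop :=
  D.Noncrossing 3 ∧ D.IsSkeleton ∧ MinStack 3 D ∧ MinArcLength 4 D

end Diagram

/-- `Qcount k n` : the number of modular `k`-noncrossing diagrams on `n` vertices. -/
def Qcount (k n : ℕ) : ℕ := Nat.card {D : Diagram n // D.Modular k}

/-- `fMatch k n = f_k(2n,0)` : the number of `k`-noncrossing perfect matchings
on `2n` vertices. -/
def fMatch (k n : ℕ) : ℕ :=
  Nat.card {D : Diagram (2 * n) // D.Noncrossing k ∧ D.Perfect}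

/-- `F_k(z) = Σ_{n ≥ 0} f_k(2n,0) zⁿ`. -/
def Fgf (k : ℕ) : PowerSeries ℚ := PowerSeries.mk fun n => (fMatch k n : ℚ)

/-- `icount2 k s m = i_k(s,m)` : the number of `V_k`-shapes with `s` arcs and
`m` 1-arcs. -/
def icount2 (k s m : ℕ) : ℕ :=
  Nat.card {D : Diagram (2 * s) // D.IsShape k ∧ D.oneArcs = m}

/-- `icount3 k s u₁ u₂ = i_k(s,u₁,u₂)` : the number of `V_k`-shapes with `s` arcs,
`u₁` 1-arcs and `u₂` pairs of mutually crossing 2-arcs. -/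
def icount3 (k s u₁ u₂ : ℕ) : ℕ :=
  Nat.card {D : Diagram (2 * s) // D.IsShape k ∧ D.oneArcs = u₁ ∧
    D.twoArcCrossPairs = u₂}

/-- `icount5 k s u₁ u₂ u₃ u₄ = i_k(s,u₁,u₂,u₃,u₄)` : the number of `V_k`-shapes with
`s` arcs and `uᵢ` `Cᵢ`-elements for `i = 1,2,3,4`. -/
def icount5 (k s u₁ u₂ u₃ u₄ : ℕ) : ℕ :=
  Nat.card {D : Diagram (2 * s) // D.IsShape k ∧ D.oneArcs = u₁ ∧
    D.twoArcCrossPairs = u₂ ∧ D.c3count = u₃ ∧ D.c4count = u₄}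

/-- `S(h)` : the number of 3-noncrossing skeleton perfect matchings with `h` arcs,
with the convention `S(0) = S(1) = 1`. -/
def Scount (h : ℕ) : ℕ :=
  if h ≤ 1 then 1
  else Nat.card {D : Diagram (2 * h) // D.Noncrossing 3 ∧ D.Perfect ∧ D.IsSkeleton}

/-- `S(y) = Σ_{h ≥ 0} S(h) y^h`. -/
def Sgf : PowerSeries ℚ := PowerSeries.mk fun h => (Scount h : ℚ)

/-- `Irr(h)` : the number of irreducible 3-noncrossing perfect matchings with `h` arcs. -/
def IrrCount (h : ℕ) : ℕ :=
  Nat.card {D : Diagram (2 * h) // D.Noncrossing 3 ∧ D.Perfect ∧ D.Irreducible}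

/-- `S3^[4](n)` : the number of canonical 3-noncrossing skeleton diagrams on `n`
vertices. -/
def S34count (n : ℕ) : ℕ := Nat.card {D : Diagram n // D.CanonicalSkeleton}

/-- `A(n,h)` : the number of canonical 3-noncrossing skeleton diagrams on `n`
vertices having exactly `h` arcs. -/
def Acount (n h : ℕ) : ℕ :=
  Nat.card {D : Diagram n // D.CanonicalSkeleton ∧ D.arcs.card = h}

/-- Substitution `f(g)` of a power series `g` with zero constant term into a
power series `f`, defined coefficientwise by (finite) sums. -/
def substPS (g f : PowerSeries ℚ) : PowerSeries ℚ :=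
  PowerSeries.mk fun n => ∑ m ∈ Finset.range (n + 1),
    (PowerSeries.coeff m f) * (PowerSeries.coeff n (g ^ m))

/-- Substitution `f(g)` of a multivariate power series `g` with zero constant term
into a univariate power series `f`, defined coefficientwise by (finite) sums. -/
def substMv {σ : Type*} (g : MvPowerSeries σ ℚ) (f : PowerSeries ℚ) :
    MvPowerSeries σ ℚ :=
  fun d => ∑ m ∈ Finset.range ((∑ i ∈ d.support, d i) + 1),
    (PowerSeries.coeff m f) * (MvPowerSeries.coeff d (g ^ m))

end

/-!
Splitting a modular noncrossing diagram at the arc that ends in its last vertex, and peeling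
off the outermost arc of a diagram with the rainbow arc `(1, n)`, give the recurrences
`Q = 1 + zQ + QG`, `Q = G + N`, `G = z²K` and `(1 - z²)K = z²N - z² - z³ - z⁴`, where `G` and
`N` count modular diagrams with and without the rainbow arc and `K` those with the rainbow arc
whose outermost stack may have size one. Eliminating `G`, `N`, `K` leaves the quadratic equation
`p Q = (1 - z² + z⁴) + z⁴ Q²`. As the Catalan series satisfies `F = 1 + zF²`, the series
`(1 - z² + z⁴) p⁻¹ F(ϑ₂)` solves the same equation, and that equation has only one power series
solution because `p(0) ≠ 0` while `z⁴` has no constant term.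
-/

def shiftArcs (l : ℕ) (s : Finset (ℕ × ℕ)) : Finset (ℕ × ℕ) :=
  s.image fun a => (a.1 + l, a.2 + l)

theorem mem_shiftArcs {l : ℕ} {s : Finset (ℕ × ℕ)} {b : ℕ × ℕ} :
    b ∈ shiftArcs l s ↔ ∃ a ∈ s, (a.1 + l, a.2 + l) = b :=
  Finset.mem_image

theorem add_mem_shiftArcs {l x y : ℕ} {s : Finset (ℕ × ℕ)} :
    (x + l, y + l) ∈ shiftArcs l s ↔ (x, y) ∈ s := by
  rw [mem_shiftArcs]
  constructor
  · rintro ⟨a, ha, h⟩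
    obtain rfl : a = (x, y) := by simp only [Prod.mk.injEq] at h; ext <;> omega
    exact ha
  · exact fun h => ⟨_, h, rfl⟩

namespace Diagram

variable {n N : ℕ}

@[ext]
theorem ext {D E : Diagram n} (h : D.arcs = E.arcs) : D = E := by
  cases D; cases E; cases h; rfl

instance : Finite (Diagram n) :=
  Finite.of_injective
    (fun D : Diagram n => (⟨D.arcs, Finset.mem_powerset.mpr fun a ha => by
        have := D.valid a ha
        simp only [Finset.mem_product, Finset.mem_range]
        omega⟩ : (Finset.range (n + 1) ×ˢ Finset.range (n + 1)).powerset))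
    fun _ _ h => ext (congrArg Subtype.val h)

theorem one_le_fst {D : Diagram n} {a : ℕ × ℕ} (ha : a ∈ D.arcs) : 1 ≤ a.1 := (D.valid a ha).1

theorem fst_lt_snd {D : Diagram n} {a : ℕ × ℕ} (ha : a ∈ D.arcs) : a.1 < a.2 :=
  (D.valid a ha).2.1

theorem snd_le {D : Diagram n} {a : ℕ × ℕ} (ha : a ∈ D.arcs) : a.2 ≤ n := (D.valid a ha).2.2

theorem eq_of_fst_eq {D : Diagram n} {a b : ℕ × ℕ} (ha : a ∈ D.arcs) (hb : b ∈ D.arcs)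
    (h : a.1 = b.1) : a = b :=
  by_contra fun hne => (D.disj a ha b hb hne).1 h

theorem eq_of_snd_eq {D : Diagram n} {a b : ℕ × ℕ} (ha : a ∈ D.arcs) (hb : b ∈ D.arcs)
    (h : a.2 = b.2) : a = b :=
  by_contra fun hne => (D.disj a ha b hb hne).2.2.2 h

theorem noncrossing_two_iff (D : Diagram n) :
    D.Noncrossing 2 ↔ ∀ a ∈ D.arcs, ∀ b ∈ D.arcs, ¬ (a.1 < b.1 ∧ b.1 < a.2 ∧ a.2 < b.2) := by
  refine ⟨fun h a ha b hb hab => h ⟨![a, b], ?_, ?_, ?_, ?_⟩, ?_⟩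
  · intro t; fin_cases t <;> assumption
  · intro s t hst; fin_cases s <;> fin_cases t <;> simp_all
  · intro s t hst; fin_cases s <;> fin_cases t <;> simp_all
  · have := fst_lt_snd ha; have := fst_lt_snd hb
    intro s t; fin_cases s <;> fin_cases t <;> simp <;> omega
  · rintro h ⟨a, ha, h1, h2, h3⟩
    exact h _ (ha 0) _ (ha 1) ⟨h1 0 1 Fin.zero_lt_one, h3 1 0, h2 0 1 Fin.zero_lt_one⟩

/-- `a.1 - 1` truncates harmlessly: no arc starts at `0`. -/
def HasParallel (D : Diagram n) (a : ℕ × ℕ) : Prop :=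
  (a.1 - 1, a.2 + 1) ∈ D.arcs ∨ (a.1 + 1, a.2 - 1) ∈ D.arcs

theorem minStack_two_iff (D : Diagram n) : MinStack 2 D ↔ ∀ a ∈ D.arcs, D.HasParallel a := by
  constructor
  · intro h a ha
    by_contra hpar
    rw [HasParallel, not_or] at hpar
    have : D.IsStack a.1 a.2 1 := ⟨one_pos, fun t ht => by simpa [Nat.lt_one_iff.mp ht] using ha,
      hpar.1, hpar.2⟩
    exact absurd (h _ _ _ this) (by norm_num)
  · rintro h i j σ ⟨hσ, harcs, htop, hbot⟩
    by_contra hlt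
    obtain rfl : σ = 1 := by omega
    have := h (i, j) (by simpa using harcs 0 hσ)
    exact this.elim htop hbot

theorem modular_two_iff {D : Diagram n} :
    D.Modular 2 ↔ D.Noncrossing 2 ∧ (∀ a ∈ D.arcs, D.HasParallel a) ∧ MinArcLength 4 D := by
  rw [Modular, minStack_two_iff]

def ModularAway (e : ℕ × ℕ) (D : Diagram n) : Prop :=
  D.Noncrossing 2 ∧ MinArcLength 4 D ∧ ∀ a ∈ D.arcs, a ≠ e → D.HasParallel a

theorem modular_two_iff_modularAway {D : Diagram n} (e : ℕ × ℕ) :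
    D.Modular 2 ↔ D.ModularAway e ∧ (e ∈ D.arcs → D.HasParallel e) := by
  rw [modular_two_iff, ModularAway]
  constructor
  · rintro ⟨hnc, hpar, hlen⟩
    exact ⟨⟨hnc, hlen, fun a ha _ => hpar a ha⟩, hpar e⟩
  · rintro ⟨⟨hnc, hlen, hpar⟩, he⟩
    refine ⟨hnc, fun a ha => ?_, hlen⟩
    by_cases hae : a = e
    · subst hae
      exact he ha
    · exact hpar a ha hae

theorem modular_two_iff_of_notMem {D : Diagram n} {e : ℕ × ℕ} (he : e ∉ D.arcs) :
    D.Modular 2 ↔ D.ModularAway e := by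
  simp [modular_two_iff_modularAway e, he]

theorem modular_iff_of_arcs_eq {m k : ℕ} {D : Diagram n} {E : Diagram m} (h : D.arcs = E.arcs) :
    D.Modular k ↔ E.Modular k := by
  simp only [Modular, Noncrossing, HasCrossing, MinStack, IsStack, MinArcLength, h]

theorem five_le_of_rainbow_mem {D : Diagram n} (hD : MinArcLength 4 D) (h : (1, n) ∈ D.arcs) :
    5 ≤ n := by
  have := hD _ h
  dsimp only at this
  omega

def empty (n : ℕ) : Diagram n := ⟨∅, by simp, by simp⟩

theorem modular_empty (n : ℕ) : (empty n).Modular 2 := by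
  simp [modular_two_iff, noncrossing_two_iff, MinArcLength, empty]

theorem eq_empty_of_minArcLength {D : Diagram n} (hD : MinArcLength 4 D) (hn : n ≤ 4) :
    D = empty n := by
  ext a
  simp only [empty, Finset.notMem_empty, iff_false]
  intro ha
  have := hD a ha
  have := one_le_fst ha
  have := snd_le ha
  omega

def window (D : Diagram N) (l j : ℕ) : Diagram j where
  arcs := (D.arcs.filter fun a => l < a.1 ∧ a.2 ≤ l + j).image fun a => (a.1 - l, a.2 - l)
  valid := by
    simp only [Finset.mem_image, Finset.mem_filter]
    rintro _ ⟨a, ⟨ha, h1, h2⟩, rfl⟩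
    have := fst_lt_snd ha
    dsimp only
    omega
  disj := by
    simp only [Finset.mem_image, Finset.mem_filter]
    rintro _ ⟨a, ⟨ha, ha1, -⟩, rfl⟩ _ ⟨b, ⟨hb, hb1, -⟩, rfl⟩ hne
    have := fst_lt_snd ha
    have := fst_lt_snd hb
    have := D.disj a ha b hb (by rintro rfl; exact hne rfl)
    dsimp only
    omega

theorem mem_window {D : Diagram N} {l j x y : ℕ} :
    (x, y) ∈ (D.window l j).arcs ↔ 1 ≤ x ∧ y ≤ j ∧ (x + l, y + l) ∈ D.arcs := by
  simp only [window, Finset.mem_image, Finset.mem_filter, Prod.exists, Prod.mk.injEq]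
  constructor
  · rintro ⟨a, b, ⟨hab, h1, h2⟩, rfl, rfl⟩
    have := fst_lt_snd hab
    refine ⟨by omega, by omega, ?_⟩
    rwa [Nat.sub_add_cancel h1.le, Nat.sub_add_cancel (by omega)]
  · rintro ⟨hx, hy, h⟩
    exact ⟨x + l, y + l, ⟨h, by omega, by omega⟩, by omega, by omega⟩

def SplitsAt (D : Diagram N) (c : ℕ) : Prop := ∀ a ∈ D.arcs, a.2 ≤ c ∨ c < a.1

theorem splitsAt_of_noncrossing {D : Diagram N} {c : ℕ} (hD : D.Noncrossing 2)
    (hc : (c + 1, N) ∈ D.arcs) : D.SplitsAt c := by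
  intro a ha
  by_contra! hac
  have hne : a ≠ (c + 1, N) := fun h => by rw [h] at hac; omega
  have := D.disj a ha _ hc hne
  have := snd_le ha
  exact (noncrossing_two_iff D).mp hD a ha _ hc (by dsimp only at *; omega)

def concat {c j : ℕ} (Dl : Diagram c) (E : Diagram j) (h : c + j = N) : Diagram N where
  arcs := Dl.arcs ∪ shiftArcs c E.arcs
  valid := by
    simp only [Finset.forall_mem_union, shiftArcs, Finset.forall_mem_image]
    refine ⟨fun a ha => ?_, fun a ha => ?_⟩
    · have := Dl.valid a ha; omega
    · have := E.valid a ha; omega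
  disj := by
    simp only [Finset.forall_mem_union, shiftArcs, Finset.forall_mem_image, ne_eq,
      Prod.mk.injEq]
    refine ⟨fun a ha => ⟨fun b hb hne => ?_, fun b hb _ => ?_⟩,
      fun a ha => ⟨fun b hb _ => ?_, fun b hb hne => ?_⟩⟩
    · simpa using Dl.disj a ha b hb (by simpa [Prod.ext_iff] using hne)
    · have := Dl.valid a ha; have := E.valid b hb; omega
    · have := E.valid a ha; have := Dl.valid b hb; omega
    · have := E.disj a ha b hb (by rintro rfl; exact hne ⟨rfl, rfl⟩)
      omega

section concat

variable {c j : ℕ} {Dl : Diagram c} {E : Diagram j} {h : c + j = N}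

theorem arcs_concat : (concat Dl E h).arcs = Dl.arcs ∪ shiftArcs c E.arcs := rfl

theorem mem_concat_of_fst_le {x y : ℕ} (hx : x ≤ c) :
    (x, y) ∈ (concat Dl E h).arcs ↔ (x, y) ∈ Dl.arcs := by
  refine (Finset.mem_union.trans (or_iff_left ?_))
  rw [mem_shiftArcs]
  rintro ⟨a, ha, hxy⟩
  have := one_le_fst ha
  simp only [Prod.mk.injEq] at hxy
  omega

theorem add_mem_concat {x y : ℕ} : (x + c, y + c) ∈ (concat Dl E h).arcs ↔ (x, y) ∈ E.arcs := by
  refine (Finset.mem_union.trans (or_iff_right fun hmem => ?_)).trans add_mem_shiftArcs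
  have := Dl.valid _ hmem
  dsimp only at this
  omega

theorem concat_splitsAt : (concat Dl E h).SplitsAt c := by
  simp only [SplitsAt, arcs_concat, shiftArcs, Finset.forall_mem_union, Finset.forall_mem_image]
  exact ⟨fun a ha => Or.inl (snd_le ha), fun a ha => Or.inr (by have := one_le_fst ha; omega)⟩

theorem window_concat_left : (concat Dl E h).window 0 c = Dl := by
  ext ⟨x, y⟩
  rw [mem_window, add_zero, add_zero]
  constructor
  · rintro ⟨-, hy, hxy⟩
    have := fst_lt_snd hxy
    exact (mem_concat_of_fst_le (by omega)).mp hxy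
  · intro hxy
    have := Dl.valid _ hxy
    exact ⟨this.1, this.2.2, (mem_concat_of_fst_le (by omega)).mpr hxy⟩

theorem window_concat_right : (concat Dl E h).window c j = E := by
  ext ⟨x, y⟩
  rw [mem_window, add_mem_concat]
  exact ⟨fun h => h.2.2, fun hxy => ⟨one_le_fst hxy, snd_le hxy, hxy⟩⟩

theorem noncrossing_two_concat :
    (concat Dl E h).Noncrossing 2 ↔ Dl.Noncrossing 2 ∧ E.Noncrossing 2 := by
  simp only [noncrossing_two_iff, arcs_concat, shiftArcs, Finset.forall_mem_union,
    Finset.forall_mem_image]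
  constructor
  · rintro ⟨hl, hr⟩
    exact ⟨fun a ha => (hl a ha).1, fun a ha b hb => by have := (hr ha).2 hb; omega⟩
  · rintro ⟨hl, hr⟩
    refine ⟨fun a ha => ⟨hl a ha, fun b hb => ?_⟩, fun a ha => ⟨fun b hb => ?_, fun b hb => ?_⟩⟩
    · have := snd_le ha; omega
    · have := snd_le hb; have := fst_lt_snd hb; omega
    · have := hr a ha b hb; omega

theorem minArcLength_concat {lam : ℕ} :
    MinArcLength lam (concat Dl E h) ↔ MinArcLength lam Dl ∧ MinArcLength lam E := by
  simp only [MinArcLength, arcs_concat, shiftArcs, Finset.forall_mem_union, Finset.forall_mem_image,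
    Nat.add_sub_add_right]

theorem hasParallel_concat_left {a : ℕ × ℕ} (ha : a ∈ Dl.arcs) :
    (concat Dl E h).HasParallel a ↔ Dl.HasParallel a := by
  have := snd_le ha
  have := fst_lt_snd ha
  rw [HasParallel, HasParallel, mem_concat_of_fst_le (by omega), mem_concat_of_fst_le (by omega)]

theorem hasParallel_concat_right {a : ℕ × ℕ} (ha : a ∈ E.arcs) :
    (concat Dl E h).HasParallel (a.1 + c, a.2 + c) ↔ E.HasParallel a := by
  have := one_le_fst ha
  have := fst_lt_snd ha
  have e₁ : (a.1 + c - 1, a.2 + c + 1) = (a.1 - 1 + c, a.2 + 1 + c) := by rw [Prod.mk.injEq]; omega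
  have e₂ : (a.1 + c + 1, a.2 + c - 1) = (a.1 + 1 + c, a.2 - 1 + c) := by rw [Prod.mk.injEq]; omega
  simp only [HasParallel, e₁, e₂, add_mem_concat]

theorem modular_concat : (concat Dl E h).Modular 2 ↔ Dl.Modular 2 ∧ E.Modular 2 := by
  have hpar : (∀ a ∈ (concat Dl E h).arcs, (concat Dl E h).HasParallel a) ↔
      (∀ a ∈ Dl.arcs, Dl.HasParallel a) ∧ ∀ a ∈ E.arcs, E.HasParallel a := by
    simp only [arcs_concat, shiftArcs, Finset.forall_mem_union, Finset.forall_mem_image]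
    exact and_congr (forall₂_congr fun a ha => hasParallel_concat_left (h := h) ha)
      (forall₂_congr fun a ha => hasParallel_concat_right (h := h) ha)
  simp only [modular_two_iff, noncrossing_two_concat, hpar, minArcLength_concat]
  tauto

end concat

theorem concat_window {D : Diagram N} {c j : ℕ} (h : c + j = N) (hD : D.SplitsAt c) :
    concat (D.window 0 c) (D.window c j) h = D := by
  ext ⟨x, y⟩
  simp only [arcs_concat, Finset.mem_union, mem_shiftArcs, Prod.exists, mem_window, Prod.mk.injEq,
    add_zero]
  constructor
  · rintro (⟨-, -, hxy⟩ | ⟨a, b, ⟨-, -, hab⟩, rfl, rfl⟩) <;> assumption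
  · intro hxy
    have := D.valid _ hxy
    rcases hD _ hxy with hy | hx
    · exact Or.inl ⟨this.1, hy, hxy⟩
    · refine Or.inr ⟨x - c, y - c, ⟨by omega, by omega, ?_⟩, by omega, by omega⟩
      rwa [Nat.sub_add_cancel (by omega), Nat.sub_add_cancel (by omega)]

def concatEquiv {c j : ℕ} (h : c + j = N) :
    Diagram c × Diagram j ≃ {D : Diagram N // D.SplitsAt c} where
  toFun p := ⟨concat p.1 p.2 h, concat_splitsAt⟩
  invFun D := (D.1.window 0 c, D.1.window c j)
  left_inv _ := Prod.ext (window_concat_left (h := h)) (window_concat_right (h := h))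
  right_inv D := Subtype.ext (concat_window h D.2)

section wrap

variable {m : ℕ}

def wrap (D : Diagram m) : Diagram (m + 2) where
  arcs := insert (1, m + 2) (shiftArcs 1 D.arcs)
  valid := by
    simp only [Finset.forall_mem_insert, shiftArcs, Finset.forall_mem_image]
    exact ⟨by omega, fun a ha => by have := D.valid a ha; omega⟩
  disj := by
    simp only [Finset.mem_insert, shiftArcs, Finset.mem_image]
    rintro _ (rfl | ⟨a, ha, rfl⟩) _ (rfl | ⟨b, hb, rfl⟩) hne
    · exact absurd rfl hne
    · have := D.valid b hb; dsimp only; omega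
    · have := D.valid a ha; dsimp only; omega
    · have := D.disj a ha b hb (by rintro rfl; exact hne rfl)
      dsimp only
      omega

theorem arcs_wrap (D : Diagram m) : (wrap D).arcs = insert (1, m + 2) (shiftArcs 1 D.arcs) :=
  rfl

theorem rainbow_mem_wrap (D : Diagram m) : (1, m + 2) ∈ (wrap D).arcs :=
  Finset.mem_insert_self _ _

theorem add_one_mem_wrap {D : Diagram m} {x y : ℕ} :
    (x + 1, y + 1) ∈ (wrap D).arcs ↔ (x = 0 ∧ y = m + 1) ∨ (x, y) ∈ D.arcs := by
  rw [arcs_wrap, Finset.mem_insert, add_mem_shiftArcs, Prod.mk.injEq]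
  exact or_congr_left (by omega)

theorem window_wrap (D : Diagram m) : (wrap D).window 1 m = D := by
  ext ⟨x, y⟩
  rw [mem_window, add_one_mem_wrap]
  constructor
  · rintro ⟨hx, -, h | h⟩
    · omega
    · exact h
  · intro hxy
    exact ⟨one_le_fst hxy, snd_le hxy, Or.inr hxy⟩

theorem wrap_window {D : Diagram (m + 2)} (hD : (1, m + 2) ∈ D.arcs) :
    wrap (D.window 1 m) = D := by
  ext ⟨x, y⟩
  by_cases hxy : 1 ≤ x ∧ 1 ≤ y
  swap
  · have (k : ℕ) (E : Diagram k) : (x, y) ∉ E.arcs := fun hmem =>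
      hxy ⟨one_le_fst hmem, (one_le_fst hmem).trans (fst_lt_snd hmem).le⟩
    simp only [this]
  obtain ⟨⟨x, rfl⟩, ⟨y, rfl⟩⟩ := And.imp Nat.exists_eq_add_of_le' Nat.exists_eq_add_of_le' hxy
  rw [add_one_mem_wrap, mem_window]
  constructor
  · rintro (⟨rfl, rfl⟩ | ⟨-, -, hmem⟩)
    · exact hD
    · exact hmem
  · intro hmem
    by_cases h0 : x = 0
    · subst h0
      have := eq_of_fst_eq hmem hD rfl
      simp only [Prod.mk.injEq] at this
      omega
    · have := D.disj _ hmem _ hD (by simp [h0])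
      have := snd_le hmem
      dsimp only at *
      exact Or.inr ⟨by omega, by omega, hmem⟩

def wrapEquiv (m : ℕ) : Diagram m ≃ {D : Diagram (m + 2) // (1, m + 2) ∈ D.arcs} where
  toFun D := ⟨wrap D, rainbow_mem_wrap D⟩
  invFun D := D.1.window 1 m
  left_inv := window_wrap
  right_inv D := Subtype.ext (wrap_window D.2)

variable {m : ℕ} {D : Diagram m}

theorem noncrossing_two_wrap : (wrap D).Noncrossing 2 ↔ D.Noncrossing 2 := by
  simp only [noncrossing_two_iff, arcs_wrap, shiftArcs, Finset.forall_mem_insert,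
    Finset.forall_mem_image]
  constructor
  · rintro ⟨-, h⟩ a ha b hb
    have := (h ha).2 hb
    omega
  · intro h
    refine ⟨⟨by omega, fun b hb => ?_⟩, fun a ha => ⟨by omega, fun b hb => ?_⟩⟩
    · have := snd_le hb; omega
    · have := h a ha b hb; omega

theorem minArcLength_wrap : MinArcLength 4 (wrap D) ↔ 3 ≤ m ∧ MinArcLength 4 D := by
  simp only [MinArcLength, arcs_wrap, shiftArcs, Finset.forall_mem_insert, Finset.forall_mem_image,
    Nat.add_sub_add_right]
  exact and_congr_left' (by omega)

theorem hasParallel_wrap_rainbow : (wrap D).HasParallel (1, m + 2) ↔ (1, m) ∈ D.arcs := by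
  have h₀ : (1 - 1, m + 2 + 1) ∉ (wrap D).arcs := fun hmem => absurd (one_le_fst hmem) (by simp)
  rw [HasParallel, or_iff_right h₀]
  exact add_one_mem_wrap.trans (by simp)

theorem hasParallel_wrap_shift {a : ℕ × ℕ} (ha : a ∈ D.arcs) :
    (wrap D).HasParallel (a.1 + 1, a.2 + 1) ↔ D.HasParallel a ∨ a = (1, m) := by
  have := one_le_fst ha
  have := fst_lt_snd ha
  have e₁ : (a.1 + 1 - 1, a.2 + 1 + 1) = (a.1 - 1 + 1, a.2 + 1 + 1) := by rw [Prod.mk.injEq]; omega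
  have e₂ : (a.1 + 1 + 1, a.2 + 1 - 1) = (a.1 + 1 + 1, a.2 - 1 + 1) := by rw [Prod.mk.injEq]; omega
  have e₃ : a.1 - 1 = 0 ∧ a.2 + 1 = m + 1 ↔ a = (1, m) := by rw [Prod.ext_iff]; omega
  simp only [HasParallel, e₁, e₂, add_one_mem_wrap, e₃, Nat.add_eq_zero_iff, one_ne_zero,
    and_false, false_and, false_or]
  tauto

theorem modularAway_wrap : (wrap D).ModularAway (1, m + 2) ↔ 3 ≤ m ∧ D.ModularAway (1, m) := by
  have hpar : (∀ a ∈ (wrap D).arcs, a ≠ (1, m + 2) → (wrap D).HasParallel a) ↔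
      ∀ a ∈ D.arcs, a ≠ (1, m) → D.HasParallel a := by
    simp only [arcs_wrap, shiftArcs, Finset.forall_mem_insert, Finset.forall_mem_image, ne_eq,
      not_true_eq_false, false_imp_iff, true_and]
    refine forall₂_congr fun a ha => ?_
    have : (a.1 + 1, a.2 + 1) ≠ (1, m + 2) := by
      have := one_le_fst ha; simp only [ne_eq, Prod.mk.injEq]; omega
    rw [hasParallel_wrap_shift ha]
    simp only [this, not_false_eq_true, true_imp_iff]
    tauto
  rw [ModularAway, ModularAway, noncrossing_two_wrap, minArcLength_wrap, hpar]
  tauto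

theorem modular_wrap : (wrap D).Modular 2 ↔ 3 ≤ m ∧ D.ModularAway (1, m) ∧ (1, m) ∈ D.arcs := by
  rw [modular_two_iff_modularAway (1, m + 2), modularAway_wrap, hasParallel_wrap_rainbow]
  simp [rainbow_mem_wrap, and_assoc]

end wrap

def castSuccEquiv (n : ℕ) : Diagram n ≃ {D : Diagram (n + 1) // ∀ a ∈ D.arcs, a.2 ≤ n} where
  toFun D := ⟨⟨D.arcs, fun _ ha => ⟨one_le_fst ha, fst_lt_snd ha, (snd_le ha).trans n.le_succ⟩,
    D.disj⟩, fun _ ha => snd_le ha⟩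
  invFun D := ⟨D.1.arcs, fun _ ha => ⟨one_le_fst ha, fst_lt_snd ha, D.2 _ ha⟩, D.1.disj⟩
  left_inv _ := rfl
  right_inv _ := rfl

end Diagram

open Diagram

theorem Nat.card_subtype_eq_add {α : Type*} [Finite α] (p q : α → Prop) :
    Nat.card {a // p a} = Nat.card {a // p a ∧ q a} + Nat.card {a // p a ∧ ¬ q a} := by
  classical
  rw [← Nat.card_sum]
  exact Nat.card_congr ((Equiv.sumCongr (Equiv.subtypeSubtypeEquivSubtypeInter p q)
    (Equiv.subtypeSubtypeEquivSubtypeInter p fun a => ¬ q a)).symm.trans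
    (Equiv.sumCompl fun a : {a // p a} => q a)).symm

theorem Nat.card_subtype_eq_of_equiv {α β : Type*} {p : α → Prop} {q r : β → Prop}
    (e : α ≃ {b // r b}) (hq : ∀ b, q b → r b) (h : ∀ a, p a ↔ q (e a)) :
    Nat.card {a // p a} = Nat.card {b // q b} :=
  Nat.card_congr ((e.subtypeEquiv h).trans (Equiv.subtypeSubtypeEquivSubtype (hq _)))

noncomputable def rainbowCount (n : ℕ) : ℕ :=
  Nat.card {D : Diagram n // D.Modular 2 ∧ (1, n) ∈ D.arcs}

noncomputable def rainbowFreeCount (n : ℕ) : ℕ :=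
  Nat.card {D : Diagram n // D.Modular 2 ∧ (1, n) ∉ D.arcs}

noncomputable def almostRainbowCount (n : ℕ) : ℕ :=
  Nat.card {D : Diagram n // D.ModularAway (1, n) ∧ (1, n) ∈ D.arcs}

theorem Qcount_two_eq_rainbowCount_add (n : ℕ) :
    Qcount 2 n = rainbowCount n + rainbowFreeCount n :=
  Nat.card_subtype_eq_add _ _

theorem Qcount_two_of_le_four {n : ℕ} (hn : n ≤ 4) : Qcount 2 n = 1 := by
  rw [Qcount, Nat.card_eq_one_iff_exists]
  exact ⟨⟨empty n, modular_empty n⟩, fun D => Subtype.ext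
    (eq_empty_of_minArcLength (modular_two_iff.mp D.2).2.2 hn)⟩

theorem rainbowCount_of_le_four {n : ℕ} (hn : n ≤ 4) : rainbowCount n = 0 :=
  Nat.card_eq_zero.mpr <| Or.inl ⟨fun D =>
    absurd (five_le_of_rainbow_mem (modular_two_iff.mp D.2.1).2.2 D.2.2) (by omega)⟩

theorem almostRainbowCount_of_le_four {n : ℕ} (hn : n ≤ 4) : almostRainbowCount n = 0 :=
  Nat.card_eq_zero.mpr <| Or.inl ⟨fun D =>
    absurd (five_le_of_rainbow_mem D.2.1.2.1 D.2.2) (by omega)⟩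

theorem rainbowCount_add_two (m : ℕ) : rainbowCount (m + 2) = almostRainbowCount m := by
  refine (Nat.card_subtype_eq_of_equiv (wrapEquiv m) (fun _ h => h.2) fun D => ?_).symm
  simp only [wrapEquiv, Equiv.coe_fn_mk, modular_wrap, rainbow_mem_wrap, and_true]
  constructor
  · intro hD
    exact ⟨by have := five_le_of_rainbow_mem hD.1.2.1 hD.2; omega, hD⟩
  · exact fun hD => hD.2

theorem almostRainbowCount_add_two {m : ℕ} (hm : 3 ≤ m) :
    almostRainbowCount (m + 2) = almostRainbowCount m + rainbowFreeCount m := by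
  have hwrap : almostRainbowCount (m + 2) = Nat.card {D : Diagram m // D.ModularAway (1, m)} :=
    (Nat.card_subtype_eq_of_equiv (wrapEquiv m) (fun _ h => h.2) fun D => by
      simp [wrapEquiv, modularAway_wrap, rainbow_mem_wrap, hm]).symm
  rw [hwrap, Nat.card_subtype_eq_add _ fun D : Diagram m => (1, m) ∈ D.arcs, almostRainbowCount,
    rainbowFreeCount]
  congr 1
  exact Nat.card_congr (Equiv.subtypeEquivRight fun D =>
    and_congr_left fun h => (modular_two_iff_of_notMem h).symm)

theorem card_modular_with_last_arc {N c j : ℕ} (h : c + j = N) :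
    Nat.card {D : Diagram N // D.Modular 2 ∧ (c + 1, N) ∈ D.arcs} =
      Qcount 2 c * rainbowCount j := by
  have hmem (Dl : Diagram c) (E : Diagram j) :
      (c + 1, N) ∈ (concat Dl E h).arcs ↔ (1, j) ∈ E.arcs := by
    rw [← add_mem_concat (h := h) (Dl := Dl), add_comm 1 c, add_comm j c, h]
  rw [← Nat.card_subtype_eq_of_equiv (concatEquiv h)
      (p := fun p => p.1.Modular 2 ∧ (p.2.Modular 2 ∧ (1, j) ∈ p.2.arcs))
      (fun D hD => splitsAt_of_noncrossing hD.1.1 hD.2) fun p => ?_,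
    Nat.card_congr (Equiv.subtypeProdEquivProd (p := fun Dl : Diagram c => Dl.Modular 2)
      (q := fun E : Diagram j => E.Modular 2 ∧ (1, j) ∈ E.arcs)), Nat.card_prod]
  · rfl
  · simp only [concatEquiv, Equiv.coe_fn_mk, modular_concat, hmem, and_assoc]

theorem Qcount_two_succ (n : ℕ) :
    Qcount 2 (n + 1) =
      Qcount 2 n + ∑ c ∈ Finset.range (n + 1), Qcount 2 c * rainbowCount (n + 1 - c) := by
  let LastArc (D : Diagram (n + 1)) (c : Fin (n + 1)) : Prop := ((c : ℕ) + 1, n + 1) ∈ D.arcs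
  have hisolated : Nat.card {D : Diagram (n + 1) // D.Modular 2 ∧ ¬ ∃ c, LastArc D c} =
      Qcount 2 n := by
    refine (Nat.card_subtype_eq_of_equiv (castSuccEquiv n) (fun D hD ⟨x, y⟩ ha => ?_)
      fun D => ?_).symm
    · have := snd_le ha
      have := fst_lt_snd ha
      have := one_le_fst ha
      dsimp only at *
      by_contra! hlt
      obtain rfl : y = n + 1 := by omega
      exact hD.2 ⟨⟨x - 1, by omega⟩, by simpa [LastArc, Nat.sub_add_cancel ‹1 ≤ x›] using ha⟩
    · refine ⟨fun hD => ⟨(modular_iff_of_arcs_eq rfl).mp hD, fun ⟨c, hc⟩ => ?_⟩,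
        fun hD => (modular_iff_of_arcs_eq rfl).mp hD.1⟩
      have := snd_le (D := D) hc
      dsimp only at this
      omega
  have hlast : Nat.card {D : Diagram (n + 1) // D.Modular 2 ∧ ∃ c, LastArc D c} =
      ∑ c : Fin (n + 1), Nat.card {D : Diagram (n + 1) // D.Modular 2 ∧ LastArc D c} := by
    rw [← Nat.card_sigma]
    refine Nat.card_congr (Equiv.ofBijective (fun x => ⟨x.2.1, x.2.2.1, x.1, x.2.2.2⟩)
      ⟨?_, fun D => ⟨⟨D.2.2.choose, D.1, D.2.1, D.2.2.choose_spec⟩, rfl⟩⟩).symm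
    rintro ⟨c, D, hD⟩ ⟨c', D', hD'⟩ h
    obtain rfl : D = D' := congrArg Subtype.val h
    obtain rfl : c = c' := Fin.ext <| by
      have := eq_of_snd_eq hD.2 hD'.2 rfl
      simpa using this
    rfl
  rw [Qcount, Nat.card_subtype_eq_add _ fun D => ∃ c, LastArc D c, add_comm, hisolated, hlast,
    ← Fin.sum_univ_eq_sum_range fun c => Qcount 2 c * rainbowCount (n + 1 - c)]
  exact congrArg _ (Finset.sum_congr rfl fun c _ => card_modular_with_last_arc (by omega))

open PowerSeries

noncomputable def modularSeries : ℚ⟦X⟧ := mk fun n => (Qcount 2 n : ℚ)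

noncomputable def rainbowSeries : ℚ⟦X⟧ := mk fun n => (rainbowCount n : ℚ)

noncomputable def rainbowFreeSeries : ℚ⟦X⟧ := mk fun n => (rainbowFreeCount n : ℚ)

noncomputable def almostRainbowSeries : ℚ⟦X⟧ := mk fun n => (almostRainbowCount n : ℚ)

theorem modularSeries_eq_rainbowSeries_add :
    modularSeries = rainbowSeries + rainbowFreeSeries := by
  ext n
  simp [modularSeries, rainbowSeries, rainbowFreeSeries, Qcount_two_eq_rainbowCount_add]

theorem modularSeries_eq_one_add_X_mul_add_mul :
    modularSeries = 1 + X * modularSeries + modularSeries * rainbowSeries := by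
  ext (_ | n)
  · simp [modularSeries, rainbowSeries, Qcount_two_of_le_four, rainbowCount_of_le_four]
  · rw [map_add, map_add, coeff_one, coeff_succ_X_mul, coeff_mul,
      Finset.Nat.sum_antidiagonal_eq_sum_range_succ_mk, Finset.sum_range_succ]
    simp [modularSeries, rainbowSeries, Qcount_two_succ, rainbowCount_of_le_four]

theorem rainbowSeries_eq_X_sq_mul : rainbowSeries = X ^ 2 * almostRainbowSeries := by
  ext n
  rw [rainbowSeries, almostRainbowSeries, coeff_X_pow_mul', coeff_mk]
  split_ifs with hn
  · obtain ⟨m, rfl⟩ := Nat.exists_eq_add_of_le' hn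
    simp [rainbowCount_add_two]
  · simp [rainbowCount_of_le_four (by omega : n ≤ 4)]

theorem one_sub_X_sq_mul_almostRainbowSeries :
    (1 - X ^ 2) * almostRainbowSeries = X ^ 2 * rainbowFreeSeries - X ^ 2 - X ^ 3 - X ^ 4 := by
  have hfree {n : ℕ} (hn : n ≤ 4) : rainbowFreeCount n = 1 := by
    have := Qcount_two_eq_rainbowCount_add n
    rwa [Qcount_two_of_le_four hn, rainbowCount_of_le_four hn, zero_add, eq_comm] at this
  ext n
  simp only [sub_mul, one_mul, map_sub, coeff_X_pow_mul', coeff_X_pow, almostRainbowSeries,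
    rainbowFreeSeries, coeff_mk]
  by_cases hn : n ≤ 4
  · interval_cases n <;> simp [almostRainbowCount_of_le_four, hfree]
  · obtain ⟨m, rfl⟩ := Nat.exists_eq_add_of_le' (by omega : 5 ≤ n)
    simp [almostRainbowCount_add_two (by omega : 3 ≤ m + 3)]

theorem modularSeries_quadratic :
    (1 - X - X ^ 2 + X ^ 3 + 2 * X ^ 4 + X ^ 6) * modularSeries =
      (1 - X ^ 2 + X ^ 4) + X ^ 4 * modularSeries ^ 2 := by
  have hrainbow : (1 - X ^ 2 + X ^ 4) * rainbowSeries =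
      X ^ 4 * modularSeries - X ^ 4 - X ^ 5 - X ^ 6 := by
    linear_combination X ^ 2 * one_sub_X_sq_mul_almostRainbowSeries +
      (1 - X ^ 2) * rainbowSeries_eq_X_sq_mul - X ^ 4 * modularSeries_eq_rainbowSeries_add
  linear_combination (1 - X ^ 2 + X ^ 4) * modularSeries_eq_one_add_X_mul_add_mul +
    modularSeries * hrainbow

theorem substPS_eq_subst {g : ℚ⟦X⟧} (hg : constantCoeff g = 0) (f : ℚ⟦X⟧) :
    substPS g f = f.subst g := by
  ext n
  rw [coeff_subst' (HasSubst.of_constantCoeff_zero' hg), substPS, coeff_mk,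
    finsum_eq_sum_of_support_subset _ (s := Finset.range (n + 1)) fun d hd => ?_]
  · simp only [smul_eq_mul]
  · by_contra hdn
    refine hd (mul_eq_zero_of_right _ (coeff_of_lt_order n ?_))
    exact (Nat.cast_lt.mpr (by simpa using hdn)).trans_le
      (le_order_pow_of_constantCoeff_eq_zero d hg)

theorem mk_catalan_eq_one_add_X_mul_sq :
    (mk fun n => (catalan n : ℚ)) = 1 + X * (mk fun n => (catalan n : ℚ)) ^ 2 := by
  have h := congrArg (map (Nat.castRingHom ℚ)) catalanSeries_sq_mul_X_add_one
  have hcat : map (Nat.castRingHom ℚ) catalanSeries = mk fun n => (catalan n : ℚ) := by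
    ext n
    simp
  rw [map_add, map_mul, map_pow, map_X, map_one, hcat] at h
  linear_combination -h

theorem PowerSeries.eq_of_mul_eq_add_mul_sq {R : Type*} [CommRing R] [IsDomain R]
    {a b c y z : R⟦X⟧} (ha : constantCoeff a ≠ 0) (hb : constantCoeff b = 0)
    (hy : a * y = c + b * y ^ 2) (hz : a * z = c + b * z ^ 2) : y = z := by
  have hfactor : (y - z) * (a - b * (y + z)) = 0 := by linear_combination hy - hz
  refine sub_eq_zero.mp ((mul_eq_zero.mp hfactor).resolve_right fun h => ha ?_)
  simpa [hb] using congrArg constantCoeff h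

open PowerSeries in
/-- The OGF of modular noncrossing diagrams (case `k = 2`) satisfies
`Q_2(z) = (1 - z² + z⁴) · p(z)⁻¹ · F_2(ϑ_2(z))` where `F_2` is the Catalan generating
function. -/
theorem modular_noncrossing_gf
    (p : PowerSeries ℚ)
    (hp : p = 1 - X - X ^ 2 + X ^ 3 + 2 * X ^ 4 + X ^ 6)
    (θ₂ : PowerSeries ℚ)
    (hθ₂ : θ₂ = (X ^ 4 - X ^ 6 + X ^ 8) * (p⁻¹) ^ 2)
    (F₂ : PowerSeries ℚ)
    (hF₂ : F₂ = PowerSeries.mk fun n => (catalan n : ℚ)) :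
    PowerSeries.mk (fun n => (Qcount 2 n : ℚ)) =
      (1 - X ^ 2 + X ^ 4) * p⁻¹ * substPS θ₂ F₂ := by
  have hp₀ : constantCoeff p = 1 := by simp [hp]
  have hθ₀ : constantCoeff θ₂ = 0 := by simp [hθ₂]
  have hinv : p * p⁻¹ = 1 := PowerSeries.mul_inv_cancel p (by simp [hp₀])
  set W := substPS θ₂ F₂
  have hW : W = 1 + θ₂ * W ^ 2 := by
    have hs := HasSubst.of_constantCoeff_zero' hθ₀
    have := congrArg (substAlgHom hs (R := ℚ)) mk_catalan_eq_one_add_X_mul_sq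
    rwa [map_add, map_one, map_mul, map_pow, substAlgHom_X, coe_substAlgHom, ← hF₂,
      ← substPS_eq_subst hθ₀] at this
  refine eq_of_mul_eq_add_mul_sq (a := p) (b := X ^ 4) (c := 1 - X ^ 2 + X ^ 4)
    (by simp [hp₀]) (by simp) (hp ▸ modularSeries_quadratic) ?_
  rw [hθ₂] at hW
  linear_combination ((1 - X ^ 2 + X ^ 4) * W) * hinv + (1 - X ^ 2 + X ^ 4) * hW
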